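/- arXiv:2208.08546 — 2 statements merged into one kernel-verified Lean document; each statement's English description precedes it below -/
import Mathlib

section
/- Let φ = ∑_{k≥0} φ_k τ^k be a formal power series over ℂ and let ν ≥ 1 be an integer. Define inductively r₁ = ν and, for i = 1, …, g: k_i is the least natural number k such that φ_k ≠ 0 and r_i does not divide k (assumed to exist for each i ≤ g), and r_{i+1} = gcd(r_i, k_i). Fix 1 ≤ i ≤ g and let ξ ∈ ℂ satisfy ξ^{r_i} = 1 and ξ^{r_{i+1}} ≠ 1. Then the series φ(τ) − φ(ξτ) = ∑_{k≥0} φ_k (1 − ξ^k) τ^k is nonzero and its order (the least k with nonzero coefficient) equals k_i. -/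
open PowerSeries

theorem PowerSeries.order_sub_rescale_eq {R : Type*} [CommRing R] [NoZeroDivisors R]
    (φ : R⟦X⟧) {ξ : R} {m k : ℕ} (hm : ξ ^ m = 1) (hk : coeff k φ ≠ 0) (hξk : ξ ^ k ≠ 1)
    (hlow : ∀ j < k, coeff j φ ≠ 0 → m ∣ j) :
    (φ - rescale ξ φ).order = k := by
  refine order_eq_nat.mpr ⟨?_, fun j hj => ?_⟩
  · rw [map_sub, coeff_rescale, ← one_sub_mul]
    exact mul_ne_zero (sub_ne_zero.mpr hξk.symm) hk
  · rw [map_sub, coeff_rescale, ← one_sub_mul]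
    by_cases hφj : coeff j φ = 0
    · rw [hφj, mul_zero]
    · obtain ⟨c, rfl⟩ := hlow j hj hφj
      rw [pow_mul, hm, one_pow, sub_self, zero_mul]

theorem stmt_4_general (φ : PowerSeries ℂ) (g : ℕ)
    (r k : ℕ → ℕ)
    (hk : ∀ i, 1 ≤ i → i ≤ g →
      (PowerSeries.coeff (k i) φ ≠ 0 ∧ ¬ r i ∣ k i) ∧
      ∀ k' < k i, PowerSeries.coeff k' φ ≠ 0 → r i ∣ k')
    (hrsucc : ∀ i, 1 ≤ i → i ≤ g → r (i + 1) = Nat.gcd (r i) (k i))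
    (i : ℕ) (hi1 : 1 ≤ i) (hig : i ≤ g)
    (ξ : ℂ) (hξ : ξ ^ r i = 1) (hξ' : ξ ^ r (i + 1) ≠ 1) :
    PowerSeries.mk (fun n => PowerSeries.coeff n φ * (1 - ξ ^ n)) ≠ 0 ∧
    PowerSeries.order (PowerSeries.mk (fun n => PowerSeries.coeff n φ * (1 - ξ ^ n)))
      = (k i : ℕ∞) := by
  obtain ⟨⟨hφk, -⟩, hmin⟩ := hk i hi1 hig
  have hξk : ξ ^ k i ≠ 1 := fun h => hξ' (hrsucc i hi1 hig ▸ pow_gcd_eq_one.mpr ⟨hξ, h⟩)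
  have hdiff : mk (fun n => coeff n φ * (1 - ξ ^ n)) = φ - rescale ξ φ := by
    ext n
    simp only [coeff_mk, map_sub, coeff_rescale]
    ring
  have hord := order_sub_rescale_eq φ hξ hφk hξk hmin
  rw [hdiff]
  exact ⟨fun h => by simp [h] at hord, hord⟩

/-- Let `φ = ∑ φ_k τ^k ∈ ℂ⟦τ⟧`, `ν ≥ 1`, and define `r₁ = ν`,
`k_i` the least `k` with `φ_k ≠ 0` and `r_i ∤ k`, and `r_{i+1} = gcd(r_i, k_i)`
(for `1 ≤ i ≤ g`).  If `1 ≤ i ≤ g` and `ξ ∈ ℂ` satisfies `ξ^{r_i} = 1` but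
`ξ^{r_{i+1}} ≠ 1`, then the series `φ(τ) − φ(ξτ) = ∑ φ_k (1 − ξ^k) τ^k` is
nonzero and has order exactly `k_i`. -/
theorem stmt_4 (φ : PowerSeries ℂ) (ν : ℕ) (hν : 1 ≤ ν) (g : ℕ)
    (r k : ℕ → ℕ) (hr1 : r 1 = ν)
    (hk : ∀ i, 1 ≤ i → i ≤ g →
      (PowerSeries.coeff (k i) φ ≠ 0 ∧ ¬ r i ∣ k i) ∧
      ∀ k' < k i, PowerSeries.coeff k' φ ≠ 0 → r i ∣ k')
    (hrsucc : ∀ i, 1 ≤ i → i ≤ g → r (i + 1) = Nat.gcd (r i) (k i))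
    (i : ℕ) (hi1 : 1 ≤ i) (hig : i ≤ g)
    (ξ : ℂ) (hξ : ξ ^ r i = 1) (hξ' : ξ ^ r (i + 1) ≠ 1) :
    PowerSeries.mk (fun n => PowerSeries.coeff n φ * (1 - ξ ^ n)) ≠ 0 ∧
    PowerSeries.order (PowerSeries.mk (fun n => PowerSeries.coeff n φ * (1 - ξ ^ n)))
      = (k i : ℕ∞) :=
  stmt_4_general φ g r k hk hrsucc i hi1 hig ξ hξ hξ'
end

section
/- Let m, p, q be positive real numbers and set t₀ = q/(p+q). For t ∈ (0,1) define F_x(t) = m(1−t)/min(pt, q(1−t)) and F_y(t) = mt/min(pt, q(1−t)). Then F_x(t₀) = m/q, F_y(t₀) = m/p, and for every t ∈ (0,1) one has F_x(t₀) ≤ F_x(t) and F_y(t₀) ≤ F_y(t). -/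
/-! Since a minimum is at most each of its arguments, `F_x(t) ≥ m(1−t)/(q(1−t)) = m/q` and
`F_y(t) ≥ mt/(pt) = m/p` for every `t ∈ (0,1)`; at `t₀` the two arguments `pt₀` and `q(1−t₀)`
coincide, so both bounds are attained there. -/

lemma div_le_mul_div_of_le_mul {m x u d : ℝ} (hm : 0 ≤ m) (hu : 0 < u) (hd : 0 < d)
    (hdx : d ≤ x * u) : m / x ≤ m * u / d :=
  calc m / x = m * u / (x * u) := (mul_div_mul_right m x hu.ne').symm
    _ ≤ m * u / d := div_le_div_of_nonneg_left (by positivity) hd hdx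

lemma one_sub_div_add_eq {p q : ℝ} (hpq : p + q ≠ 0) : 1 - q / (p + q) = p / (p + q) := by
  rw [one_sub_div hpq, add_sub_cancel_right]

/-- For positive reals `m, p, q` and `t₀ = q/(p+q)`, the functions
`F_x(t) = m(1−t)/min(pt, q(1−t))` and `F_y(t) = mt/min(pt, q(1−t))` on `(0,1)`
satisfy `F_x(t₀) = m/q`, `F_y(t₀) = m/p`, and both attain their minimum over
`(0,1)` at `t₀`. -/
theorem stmt_7 (m p q : ℝ) (hm : 0 < m) (hp : 0 < p) (hq : 0 < q) :
    let t₀ : ℝ := q / (p + q)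
    let Fx : ℝ → ℝ := fun t => m * (1 - t) / min (p * t) (q * (1 - t))
    let Fy : ℝ → ℝ := fun t => m * t / min (p * t) (q * (1 - t))
    Fx t₀ = m / q ∧ Fy t₀ = m / p ∧
      ∀ t ∈ Set.Ioo (0 : ℝ) 1, Fx t₀ ≤ Fx t ∧ Fy t₀ ≤ Fy t := by
  intro t₀ Fx Fy
  have hpq : p + q ≠ 0 := by positivity
  have hmin₀ : min (p * t₀) (q * (1 - t₀)) = p * q / (p + q) := by
    rw [one_sub_div_add_eq hpq, mul_div_assoc', mul_div_assoc', mul_comm q p, min_self]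
  have hFx : Fx t₀ = m / q := by
    change m * (1 - t₀) / min (p * t₀) (q * (1 - t₀)) = m / q
    rw [hmin₀, one_sub_div_add_eq hpq]
    field_simp
  have hFy : Fy t₀ = m / p := by
    change m * t₀ / min (p * t₀) (q * (1 - t₀)) = m / p
    rw [hmin₀, show t₀ = q / (p + q) from rfl]
    field_simp
  refine ⟨hFx, hFy, fun t ⟨ht₀, ht₁⟩ => ?_⟩
  have hmin : 0 < min (p * t) (q * (1 - t)) := by
    apply lt_min <;> apply mul_pos <;> linarith
  rw [hFx, hFy]
  exact ⟨div_le_mul_div_of_le_mul hm.le (by linarith) hmin (min_le_right _ _),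
    div_le_mul_div_of_le_mul hm.le ht₀ hmin (min_le_left _ _)⟩
end
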